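/- Let Ψ : ℝ² → ℝ be C³ in variables (y,z) with Ψ_{yz} = Ψ, and let W : ℝ → ℝ be differentiable. Define q := Ψ_y + Ψ and s := W(e^{y+z}(Ψ_y + Ψ_z − 2Ψ)). Then q satisfies the Klein–Gordon equation q_{yz} = q, and s satisfies K¹ s_y = K² s_z on ℝ², where K¹ := q_{zz} − 2q_z + q and K² := q_y + q_z − 2q. -/

import Mathlib

noncomputable section

/-- Partial derivative with respect to the first variable (y). -/
def py (f : ℝ × ℝ → ℝ) (p : ℝ × ℝ) : ℝ := fderiv ℝ f p (1, 0)

/-- Partial derivative with respect to the second variable (z). -/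
def pz (f : ℝ × ℝ → ℝ) (p : ℝ × ℝ) : ℝ := fderiv ℝ f p (0, 1)

/-!
With `h := Ψ_y + Ψ_z − 2Ψ` we have `s = W (e^{y+z} h)`, so `s_y = W' e^{y+z} (h + h_y)` and
`s_z = W' e^{y+z} (h + h_z)`. Using `Ψ_{yz} = Ψ` one computes `h + h_y = K²` and `h + h_z = K¹`,
whence `K¹ s_y = W' e^{y+z} K¹ K² = K² s_z`. That `q = Ψ_y + Ψ` again solves the Klein–Gordon
equation follows from its linearity and from its invariance under `∂_y` (mixed partials commute).
-/

section PartialDeriv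

variable {f g : ℝ × ℝ → ℝ}

lemma py_add (hf : Differentiable ℝ f) (hg : Differentiable ℝ g) :
    py (fun x => f x + g x) = fun x => py f x + py g x :=
  funext fun p => by simp [py, fderiv_fun_add (hf p) (hg p)]

lemma pz_add (hf : Differentiable ℝ f) (hg : Differentiable ℝ g) :
    pz (fun x => f x + g x) = fun x => pz f x + pz g x :=
  funext fun p => by simp [pz, fderiv_fun_add (hf p) (hg p)]

lemma py_sub (hf : Differentiable ℝ f) (hg : Differentiable ℝ g) :
    py (fun x => f x - g x) = fun x => py f x - py g x :=
  funext fun p => by simp [py, fderiv_fun_sub (hf p) (hg p)]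

lemma pz_sub (hf : Differentiable ℝ f) (hg : Differentiable ℝ g) :
    pz (fun x => f x - g x) = fun x => pz f x - pz g x :=
  funext fun p => by simp [pz, fderiv_fun_sub (hf p) (hg p)]

lemma py_const_mul (c : ℝ) (hf : Differentiable ℝ f) :
    py (fun x => c * f x) = fun x => c * py f x :=
  funext fun p => by simp [py, fderiv_const_mul (hf p)]

lemma pz_const_mul (c : ℝ) (hf : Differentiable ℝ f) :
    pz (fun x => c * f x) = fun x => c * pz f x :=
  funext fun p => by simp [pz, fderiv_const_mul (hf p)]

lemma ContDiff.py {n : WithTop ℕ∞} (hf : ContDiff ℝ (n + 1) f) : ContDiff ℝ n (py f) :=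
  (hf.fderiv_right le_rfl).clm_apply contDiff_const

lemma ContDiff.pz {n : WithTop ℕ∞} (hf : ContDiff ℝ (n + 1) f) : ContDiff ℝ n (pz f) :=
  (hf.fderiv_right le_rfl).clm_apply contDiff_const

lemma pz_py_comm (hf : ContDiff ℝ 2 f) : pz (py f) = py (pz f) := by
  funext p
  have hf' : DifferentiableAt ℝ (fderiv ℝ f) p :=
    ((hf.fderiv_right (m := 1) le_rfl).differentiable one_ne_zero).differentiableAt
  have hsymm := (hf.contDiffAt (x := p)).isSymmSndFDerivAt (n := 2) (by simp) (1, 0) (0, 1)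
  change fderiv ℝ (fun x => fderiv ℝ f x (1, 0)) p (0, 1) =
    fderiv ℝ (fun x => fderiv ℝ f x (0, 1)) p (1, 0)
  simpa [fderiv_clm_apply hf' (differentiableAt_const _)] using hsymm.symm

lemma fderiv_comp_exp_add_mul {W : ℝ → ℝ} {h : ℝ × ℝ → ℝ} {p : ℝ × ℝ}
    (hW : DifferentiableAt ℝ W (Real.exp (p.1 + p.2) * h p)) (hh : DifferentiableAt ℝ h p)
    (v : ℝ × ℝ) :
    fderiv ℝ (fun x => W (Real.exp (x.1 + x.2) * h x)) p v =
      deriv W (Real.exp (p.1 + p.2) * h p) * Real.exp (p.1 + p.2) *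
        ((v.1 + v.2) * h p + fderiv ℝ h p v) := by
  have hE : HasFDerivAt (fun x : ℝ × ℝ => Real.exp (x.1 + x.2))
      (Real.exp (p.1 + p.2) • (ContinuousLinearMap.fst ℝ ℝ ℝ + ContinuousLinearMap.snd ℝ ℝ ℝ)) p :=
    (hasFDerivAt_fst.add hasFDerivAt_snd).exp
  have hcomp : HasFDerivAt (fun x => W (Real.exp (x.1 + x.2) * h x)) _ p :=
    hW.hasDerivAt.comp_hasFDerivAt p (hE.mul hh.hasFDerivAt)
  rw [hcomp.fderiv]
  simp only [smul_add, add_apply, smul_apply, smul_eq_mul,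
    ContinuousLinearMap.coe_fst', ContinuousLinearMap.coe_snd']
  ring

lemma py_comp_exp_add_mul {W : ℝ → ℝ} {h : ℝ × ℝ → ℝ} {p : ℝ × ℝ}
    (hW : DifferentiableAt ℝ W (Real.exp (p.1 + p.2) * h p)) (hh : DifferentiableAt ℝ h p) :
    py (fun x => W (Real.exp (x.1 + x.2) * h x)) p =
      deriv W (Real.exp (p.1 + p.2) * h p) * Real.exp (p.1 + p.2) * (h p + py h p) := by
  simpa [py] using fderiv_comp_exp_add_mul hW hh (1, 0)

lemma pz_comp_exp_add_mul {W : ℝ → ℝ} {h : ℝ × ℝ → ℝ} {p : ℝ × ℝ}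
    (hW : DifferentiableAt ℝ W (Real.exp (p.1 + p.2) * h p)) (hh : DifferentiableAt ℝ h p) :
    pz (fun x => W (Real.exp (x.1 + x.2) * h x)) p =
      deriv W (Real.exp (p.1 + p.2) * h p) * Real.exp (p.1 + p.2) * (h p + pz h p) := by
  simpa [pz] using fderiv_comp_exp_add_mul hW hh (0, 1)

end PartialDeriv

def IsKleinGordon (f : ℝ × ℝ → ℝ) : Prop := ∀ p, pz (py f) p = f p

def K1 (q : ℝ × ℝ → ℝ) (p : ℝ × ℝ) : ℝ := pz (pz q) p - 2 * pz q p + q p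

def K2 (q : ℝ × ℝ → ℝ) (p : ℝ × ℝ) : ℝ := py q p + pz q p - 2 * q p

namespace IsKleinGordon

variable {f g : ℝ × ℝ → ℝ}

lemma add (hf : ContDiff ℝ 2 f) (hg : ContDiff ℝ 2 g) (hKf : IsKleinGordon f)
    (hKg : IsKleinGordon g) : IsKleinGordon (fun p => f p + g p) := by
  have hfy : ContDiff ℝ 1 (py f) := hf.py
  have hgy : ContDiff ℝ 1 (py g) := hg.py
  intro p
  simp only [py_add (hf.differentiable two_ne_zero) (hg.differentiable two_ne_zero),
    pz_add (hfy.differentiable one_ne_zero) (hgy.differentiable one_ne_zero), hKf p, hKg p]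

lemma py (hf : ContDiff ℝ 3 f) (hK : IsKleinGordon f) : IsKleinGordon (py f) := by
  intro p
  rw [pz_py_comm hf.py, show pz (_root_.py f) = f from funext hK]

end IsKleinGordon

section KleinGordonPotential

variable {Ψ : ℝ × ℝ → ℝ}

lemma K2_py_add_self (hΨ : ContDiff ℝ 2 Ψ) (hK : IsKleinGordon Ψ) (p : ℝ × ℝ) :
    K2 (fun x => py Ψ x + Ψ x) p =
      (py Ψ p + pz Ψ p - 2 * Ψ p) + py (fun x => py Ψ x + pz Ψ x - 2 * Ψ x) p := by
  have hΨd : Differentiable ℝ Ψ := hΨ.differentiable two_ne_zero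
  have hΨy : Differentiable ℝ (py Ψ) := (hΨ.py (n := 1)).differentiable one_ne_zero
  have hΨz : Differentiable ℝ (pz Ψ) := (hΨ.pz (n := 1)).differentiable one_ne_zero
  rw [py_sub (hΨy.fun_add hΨz) (hΨd.const_mul 2)]
  simp only [K2, py_add hΨy hΨd, pz_add hΨy hΨd, py_add hΨy hΨz, py_const_mul 2 hΨd,
    ← pz_py_comm hΨ, hK p]
  ring

lemma K1_py_add_self (hΨ : ContDiff ℝ 2 Ψ) (hK : IsKleinGordon Ψ) (p : ℝ × ℝ) :
    K1 (fun x => py Ψ x + Ψ x) p =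
      (py Ψ p + pz Ψ p - 2 * Ψ p) + pz (fun x => py Ψ x + pz Ψ x - 2 * Ψ x) p := by
  have hΨd : Differentiable ℝ Ψ := hΨ.differentiable two_ne_zero
  have hΨy : Differentiable ℝ (py Ψ) := (hΨ.py (n := 1)).differentiable one_ne_zero
  have hΨz : Differentiable ℝ (pz Ψ) := (hΨ.pz (n := 1)).differentiable one_ne_zero
  rw [pz_sub (hΨy.fun_add hΨz) (hΨd.const_mul 2)]
  simp only [K1, pz_add hΨy hΨd, show pz (py Ψ) = Ψ from funext hK, pz_add hΨd hΨz,
    pz_add hΨy hΨz, pz_const_mul 2 hΨd]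
  ring

end KleinGordonPotential

theorem pseudopotential_solution_of_K
    (Ψ : ℝ × ℝ → ℝ) (hΨ : ContDiff ℝ 3 Ψ)
    (hKG : ∀ p : ℝ × ℝ, pz (py Ψ) p = Ψ p)
    (W : ℝ → ℝ) (hW : Differentiable ℝ W) :
    let q : ℝ × ℝ → ℝ := fun p => py Ψ p + Ψ p
    let s : ℝ × ℝ → ℝ := fun p =>
      W (Real.exp (p.1 + p.2) * (py Ψ p + pz Ψ p - 2 * Ψ p))
    ∀ p : ℝ × ℝ,
      pz (py q) p = q p ∧
      (pz (pz q) p - 2 * pz q p + q p) * py s p =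
        (py q p + pz q p - 2 * q p) * pz s p := by
  intro q s p
  have hKG : IsKleinGordon Ψ := hKG
  have hΨ2 : ContDiff ℝ 2 Ψ := hΨ.of_le (by norm_num)
  have hh : Differentiable ℝ (fun x => py Ψ x + pz Ψ x - 2 * Ψ x) :=
    (((hΨ.py (n := 2)).add hΨ.pz).sub (contDiff_const.mul hΨ2)).differentiable (by norm_num)
  refine ⟨(hKG.py hΨ).add hΨ.py hΨ2 hKG p, ?_⟩
  obtain ⟨c, hsy, hsz⟩ : ∃ c, py s p = c * K2 q p ∧ pz s p = c * K1 q p :=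
    ⟨_, by rw [K2_py_add_self hΨ2 hKG]; exact py_comp_exp_add_mul (hW _) (hh p),
      by rw [K1_py_add_self hΨ2 hKG]; exact pz_comp_exp_add_mul (hW _) (hh p)⟩
  change K1 q p * py s p = K2 q p * pz s p
  rw [hsy, hsz]
  ring
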